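/- Let I be a linearly ordered set whose decomposition into rooted trees is I = ⊔_{k∈K} I_k, with k the minimal element of I_k. Fix k ∈ K and an element 1̂ ∉ I. Then the set I + 1̂ equipped with all order relations of I together with the relations k < 1̂ and 1̂ < h for every non-minimal element h of I_k is again a linearly ordered set, and its decomposition into rooted trees has the same index set K. -/
import Mathlib


/-- The order on `I + 1̂` (with `1̂` modeled by `none : Option I`) generated by the
order of `I` together with the relations `k < 1̂` and `1̂ < h` for every non-minimal
element `h` of the rooted tree `I_k = {i : k ≤ i}`: its transitive closure is
`a ≤ 1̂ ↔ a ≤ k` and `1̂ ≤ b ↔ k < b`. -/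
def optLE {I : Type*} [PartialOrder I] (k : I) : Option I → Option I → Prop
  | some a, some b => a ≤ b
  | some a, none   => a ≤ k
  | none,   some b => k < b
  | none,   none   => True

/-- Let `I` be a linearly ordered set and `k` one of its minimal elements (the root of
the rooted tree `I_k` in the decomposition of `I` into rooted trees indexed by the
minimal elements of `I`).  Then `I +_k 1̂` with the generated order is again a
partially ordered set satisfying the linearly-ordered-set condition, and its minimal
elements are exactly the (images of the) minimal elements of `I`; in particular the
decomposition of `I +_k 1̂` into rooted trees has the same index set `K`. -/
theorem stmt2 {I : Type*} [Fintype I] [PartialOrder I]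
    (hlin : ∀ i1 i2 h : I, i1 < h → i2 < h → i1 ≤ i2 ∨ i2 ≤ i1)
    (k : I) (hk : ∀ i : I, i ≤ k → i = k) :
    (Reflexive (optLE k) ∧ Transitive (optLE k) ∧
      ∀ x y : Option I, optLE k x y → optLE k y x → x = y) ∧
    (∀ x y z : Option I, (optLE k x z ∧ x ≠ z) → (optLE k y z ∧ y ≠ z) →
        optLE k x y ∨ optLE k y x) ∧
    (∀ x : Option I, (∀ y : Option I, optLE k y x → y = x) ↔
        ∃ i : I, x = some i ∧ ∀ j : I, j ≤ i → j = i) := by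
  refine ⟨⟨?_, ?_, ?_⟩, ?_, ?_⟩
  · rintro (_ | a) <;> simp [optLE]
  · rintro (_ | a) (_ | b) (_ | c) hab hbc <;>
      simp only [optLE] at hab hbc ⊢ <;>
      first
      | trivial
      | assumption
      | exact le_trans hab hbc
      | exact lt_of_lt_of_le hab hbc
      | exact le_of_lt (lt_of_le_of_lt hab hbc)
  · rintro (_ | a) (_ | b) hab hba <;> simp only [optLE] at hab hba <;>
      first
      | rfl
      | exact absurd (lt_of_lt_of_le hab hba) (lt_irrefl k)
      | exact absurd (lt_of_le_of_lt hab hba) (lt_irrefl a)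
      | exact congrArg some (le_antisymm hab hba)
  · rintro (_ | a) (_ | b) (_ | c) ⟨hxz, hxz'⟩ ⟨hyz, hyz'⟩
    · exact absurd rfl hxz'
    · -- x = none, y = none, z = some c
      exact Or.inl trivial
    · exact absurd rfl hxz'
    · -- x = none, y = some b, z = some c
      simp only [optLE] at hxz hyz ⊢
      have hb : b < c := lt_of_le_of_ne hyz (by simpa using hyz')
      rcases hlin k b c hxz hb with h | h
      · rcases lt_or_eq_of_le h with h' | h'
        · exact Or.inl h'
        · exact Or.inr (le_of_eq h'.symm)
      · exact Or.inr h
    · exact absurd rfl hyz'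
    · -- x = some a, y = none, z = some c
      simp only [optLE] at hxz hyz ⊢
      have ha : a < c := lt_of_le_of_ne hxz (by simpa using hxz')
      rcases hlin a k c ha hyz with h | h
      · exact Or.inl h
      · rcases lt_or_eq_of_le h with h' | h'
        · exact Or.inr h'
        · exact Or.inl (le_of_eq h'.symm)
    · -- x = some a, y = some b, z = none
      simp only [optLE] at hxz hyz ⊢
      exact Or.inl (le_of_eq ((hk a hxz).trans (hk b hyz).symm))
    · -- all some
      simp only [optLE] at hxz hyz ⊢
      exact hlin a b c (lt_of_le_of_ne hxz (by simpa using hxz'))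
        (lt_of_le_of_ne hyz (by simpa using hyz'))
  · rintro (_ | i)
    · constructor
      · intro h
        exact absurd (h (some k) (le_refl k)) (by simp)
      · rintro ⟨i, h, -⟩; exact absurd h (by simp)
    · constructor
      · intro h
        exact ⟨i, rfl, fun j hj => by simpa using h (some j) hj⟩
      · rintro ⟨i', hi', hmin⟩ (_ | j) hy <;>
          simp only [Option.some.injEq] at hi' <;> subst hi' <;>
          simp only [optLE] at hy
        · exact absurd (hmin k (le_of_lt hy)) (fun e => lt_irrefl i (e ▸ hy))
        · exact congrArg some (hmin j hy)
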